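/- arXiv:1911.02763 — 2 statements merged into one kernel-verified Lean document; each statement's English description precedes it below -/
import Mathlib

section
/- Let p and q be distinct primes with p < q, and let S = S(ℤ_{pq}) be the set of elements of ℤ_{pq} whose additive order is 1 or a prime number. Then |S| = p + q − 1, and the vertex connectivity of the prime coprime graph Θ(ℤ_{pq}) equals p + q − 1: removing the p + q − 1 vertices of S disconnects Θ(ℤ_{pq}), while removing any set of fewer than p + q − 1 vertices leaves a connected graph. -/
/-- The prime coprime graph of an additive group: two distinct vertices are
adjacent iff the gcd of their (additive) orders is `1` or a prime. -/
def pcGraphAdd (G : Type*) [AddGroup G] : SimpleGraph G where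
  Adj x y := x ≠ y ∧
    (Nat.gcd (addOrderOf x) (addOrderOf y) = 1 ∨ (Nat.gcd (addOrderOf x) (addOrderOf y)).Prime)
  symm := ⟨by
    rintro x y ⟨hxy, h⟩
    exact ⟨hxy.symm, by rwa [Nat.gcd_comm]⟩⟩
  loopless := ⟨fun x h => h.1 rfl⟩

/-- The vertex connectivity of a graph: the minimum number of vertices whose removal
results in a disconnected or trivial (subsingleton) graph. -/
noncomputable def vertexConnectivity {V : Type*} (G : SimpleGraph V) : ℕ :=
  sInf {k | ∃ T : Set V,
    T.ncard = k ∧ (¬ (SimpleGraph.induce Tᶜ G).Connected ∨ Tᶜ.Subsingleton)}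

/-!
Every element of prime order or of order 1 has gcd of orders with anything equal to 1 or to
that prime, so it is adjacent to every other vertex; hence deleting fewer than |S| vertices
leaves such a universal vertex and the graph stays connected. In ℤ/pqℤ the elements outside S
are exactly the φ(pq) = (p - 1)(q - 1) ≥ 2 generators, all of order pq, and two of them have
gcd pq, which is neither 1 nor prime: removing S leaves an edgeless graph on at least two
vertices.
-/

def primeOrderSet (G : Type*) [AddGroup G] : Set G :=
  {x | addOrderOf x = 1 ∨ (addOrderOf x).Prime}

section Graph

variable {V : Type*} {G : SimpleGraph V}

lemma SimpleGraph.connected_induce_compl_of_forall_adj {T : Set V} {v : V} (hv : v ∉ T)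
    (hadj : ∀ w, w ≠ v → G.Adj v w) : (G.induce Tᶜ).Connected := by
  rw [SimpleGraph.connected_iff_exists_forall_reachable]
  refine ⟨⟨v, hv⟩, fun ⟨w, hw⟩ => ?_⟩
  obtain rfl | hwv := eq_or_ne w v
  · rfl
  · exact SimpleGraph.Adj.reachable (G := G.induce Tᶜ) (hadj w hwv)

lemma vertexConnectivity_eq_ncard [Finite V] {S : Set V} (hSc : Sᶜ.Nontrivial)
    (hS : ¬ (G.induce Sᶜ).Connected)
    (hT : ∀ T : Set V, T.ncard < S.ncard → (G.induce Tᶜ).Connected) :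
    vertexConnectivity G = S.ncard := by
  refine le_antisymm (Nat.sInf_le ⟨S, rfl, Or.inl hS⟩) (le_csInf ⟨_, S, rfl, Or.inl hS⟩ ?_)
  rintro _ ⟨T, rfl, hT' | hT'⟩
  · exact not_lt.mp fun h => hT' (hT T h)
  · have hTc : Tᶜ.ncard ≤ 1 := Set.ncard_le_one_iff_subsingleton.mpr hT'
    have hSc' : 1 < Sᶜ.ncard := Set.one_lt_ncard_iff_nontrivial.mpr hSc
    have := Set.ncard_add_ncard_compl S
    have := Set.ncard_add_ncard_compl T
    omega

end Graph

section PrimeCoprimeGraph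

variable {G : Type*} [AddGroup G] {x y : G}

lemma pcGraphAdd_adj_of_mem_primeOrderSet (hx : x ∈ primeOrderSet G) (hxy : x ≠ y) :
    (pcGraphAdd G).Adj x y := by
  refine ⟨hxy, ?_⟩
  rcases hx with hx | hx
  · exact Or.inl (Nat.eq_one_of_dvd_one (hx ▸ Nat.gcd_dvd_left _ _))
  · rcases hx.eq_one_or_self_of_dvd _ (Nat.gcd_dvd_left _ _) with h | h
    · exact Or.inl h
    · exact Or.inr (by rw [h]; exact hx)

lemma pcGraphAdd_not_adj_of_addOrderOf_eq (hx : x ∉ primeOrderSet G)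
    (hxy : addOrderOf y = addOrderOf x) : ¬ (pcGraphAdd G).Adj x y := by
  rintro ⟨-, h⟩
  rw [hxy, Nat.gcd_self] at h
  exact hx h

end PrimeCoprimeGraph

section ZModMulPrimes

variable {p q : ℕ}

lemma Nat.eq_one_or_self_of_dvd_mul_primes (hp : p.Prime) (hq : q.Prime) {d : ℕ}
    (hd : d ∣ p * q) : d = 1 ∨ d = p ∨ d = q ∨ d = p * q := by
  obtain ⟨a, b, ha, hb, rfl⟩ := Nat.dvd_mul.mp hd
  rcases (Nat.dvd_prime hp).mp ha with rfl | rfl <;>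
    rcases (Nat.dvd_prime hq).mp hb with rfl | rfl <;> simp

lemma Nat.sub_one_mul_sub_one_add_sub_one (hp : 1 ≤ p) (hq : 1 ≤ q) :
    (p - 1) * (q - 1) + (p + q - 1) = p * q := by
  obtain ⟨a, rfl⟩ := Nat.exists_eq_add_of_le' hp
  obtain ⟨b, rfl⟩ := Nat.exists_eq_add_of_le' hq
  rw [show a + 1 + (b + 1) - 1 = a + b + 1 by omega, Nat.add_sub_cancel, Nat.add_sub_cancel]
  ring

lemma compl_primeOrderSet_zmod (hp : p.Prime) (hq : q.Prime) :
    (primeOrderSet (ZMod (p * q)))ᶜ = {x | addOrderOf x = p * q} := by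
  ext x
  have hdvd : addOrderOf x ∣ p * q := by simpa using addOrderOf_dvd_natCard x
  simp only [primeOrderSet, Set.mem_compl_iff, Set.mem_ofPred_eq]
  constructor
  · intro hx
    rcases Nat.eq_one_or_self_of_dvd_mul_primes hp hq hdvd with h | h | h | h
    · exact absurd (Or.inl h) hx
    · exact absurd (Or.inr (by rw [h]; exact hp)) hx
    · exact absurd (Or.inr (by rw [h]; exact hq)) hx
    · exact h
  · rintro h (h' | h') <;> rw [h] at h'
    · exact hp.ne_one (Nat.eq_one_of_mul_eq_one_right h')
    · exact Nat.not_prime_mul hp.ne_one hq.ne_one h'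

lemma ncard_compl_primeOrderSet_zmod (hp : p.Prime) (hq : q.Prime) (hpq : p ≠ q) :
    (primeOrderSet (ZMod (p * q)))ᶜ.ncard = (p - 1) * (q - 1) := by
  have : NeZero (p * q) := ⟨Nat.mul_ne_zero hp.ne_zero hq.ne_zero⟩
  rw [compl_primeOrderSet_zmod hp hq, Set.ncard_eq_toFinset_card', Set.toFinset_ofPred,
    IsAddCyclic.card_addOrderOf_eq_totient (ZMod.card (p * q)).symm.dvd,
    Nat.totient_mul ((Nat.coprime_primes hp hq).mpr hpq),
    Nat.totient_prime hp, Nat.totient_prime hq]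

lemma ncard_primeOrderSet_zmod (hp : p.Prime) (hq : q.Prime) (hpq : p ≠ q) :
    (primeOrderSet (ZMod (p * q))).ncard = p + q - 1 := by
  have : NeZero (p * q) := ⟨Nat.mul_ne_zero hp.ne_zero hq.ne_zero⟩
  have hsum := Set.ncard_add_ncard_compl (primeOrderSet (ZMod (p * q)))
  rw [ncard_compl_primeOrderSet_zmod hp hq hpq, Nat.card_zmod] at hsum
  have := Nat.sub_one_mul_sub_one_add_sub_one hp.one_lt.le hq.one_lt.le
  omega

lemma nontrivial_compl_primeOrderSet_zmod (hp : p.Prime) (hq : q.Prime) (hpq : p ≠ q) :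
    (primeOrderSet (ZMod (p * q)))ᶜ.Nontrivial := by
  have : NeZero (p * q) := ⟨Nat.mul_ne_zero hp.ne_zero hq.ne_zero⟩
  rw [← Set.one_lt_ncard_iff_nontrivial, ncard_compl_primeOrderSet_zmod hp hq hpq]
  have := hp.two_le
  have := hq.two_le
  exact Nat.one_lt_mul_iff.mpr (by omega)

lemma not_connected_induce_compl_primeOrderSet_zmod (hp : p.Prime) (hq : q.Prime)
    (hpq : p ≠ q) :
    ¬ ((pcGraphAdd (ZMod (p * q))).induce (primeOrderSet (ZMod (p * q)))ᶜ).Connected := by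
  have hbot : (pcGraphAdd (ZMod (p * q))).induce (primeOrderSet (ZMod (p * q)))ᶜ = ⊥ := by
    ext ⟨x, hx⟩ ⟨y, hy⟩
    have hxy : addOrderOf y = addOrderOf x := by
      rw [compl_primeOrderSet_zmod hp hq] at hx hy
      exact hy.trans hx.symm
    simpa using pcGraphAdd_not_adj_of_addOrderOf_eq hx hxy
  have := (nontrivial_compl_primeOrderSet_zmod hp hq hpq).coe_sort
  exact hbot ▸ SimpleGraph.not_connected_bot

end ZModMulPrimes

/-- For distinct primes p < q, the set S of elements of ℤ/pqℤ of order 1 or prime order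
has p + q - 1 elements; removing S disconnects the prime coprime graph while removing
fewer than p + q - 1 vertices leaves it connected, so its vertex connectivity is
p + q - 1. -/
theorem pcGraph_zmod_pq_vertexConnectivity (p q : ℕ) (hp : p.Prime) (hq : q.Prime)
    (hpq : p < q) :
    let S : Set (ZMod (p * q)) := {x | addOrderOf x = 1 ∨ (addOrderOf x).Prime}
    S.ncard = p + q - 1 ∧
    ¬ (SimpleGraph.induce Sᶜ (pcGraphAdd (ZMod (p * q)))).Connected ∧
    (∀ T : Set (ZMod (p * q)), T.ncard < p + q - 1 →
      (SimpleGraph.induce Tᶜ (pcGraphAdd (ZMod (p * q)))).Connected) ∧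
    vertexConnectivity (pcGraphAdd (ZMod (p * q))) = p + q - 1 := by
  change let S := primeOrderSet (ZMod (p * q)); _
  intro S
  have : NeZero (p * q) := ⟨Nat.mul_ne_zero hp.ne_zero hq.ne_zero⟩
  have hcard : S.ncard = p + q - 1 := ncard_primeOrderSet_zmod hp hq hpq.ne
  have hdisc := not_connected_induce_compl_primeOrderSet_zmod hp hq hpq.ne
  have hconn : ∀ T : Set (ZMod (p * q)), T.ncard < p + q - 1 →
      ((pcGraphAdd (ZMod (p * q))).induce Tᶜ).Connected := by
    intro T hT
    obtain ⟨s, hsS, hsT⟩ : ∃ s ∈ S, s ∉ T :=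
      Set.not_subset.mp fun h => (Set.ncard_le_ncard h).not_gt (hcard ▸ hT)
    exact SimpleGraph.connected_induce_compl_of_forall_adj hsT
      fun w hw => pcGraphAdd_adj_of_mem_primeOrderSet hsS hw.symm
  refine ⟨hcard, hdisc, hconn, hcard ▸ ?_⟩
  exact vertexConnectivity_eq_ncard (nontrivial_compl_primeOrderSet_zmod hp hq hpq.ne) hdisc
    (hcard ▸ hconn)
end

section
/- Let p be a prime and let m ≥ 2 be a natural number. The characteristic polynomial of the signless Laplacian matrix Q of the prime coprime graph Θ(ℤ_{p^m}), viewed as a real matrix, equals (X − p)^{p^m − p − 1} · (X − (p^m − 2))^{p−1} · (X² − (p^m + 2p − 2)·X + 2p(p−1)). In particular, the eigenvalues of Q are p with multiplicity p^m − p − 1, p^m − 2 with multiplicity p − 1, and the two roots of X² − (p^m + 2p − 2)X + 2p(p−1) = 0, each with multiplicity 1. -/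
/-!
Element orders in `ℤ/p^m` are powers of `p`, so `gcd (o x) (o y)` is `1` or a prime exactly
when `x` or `y` has order dividing `p`. Hence `Θ(ℤ/p^m)` is the complete split graph whose
clique is the subgroup of order `p` and whose independent set consists of the other `p^m - p`
elements. Listing the clique first, `Q = [[(n-2)I + J, J], [J, pI]]` with `n = p^m` and `J`
all-ones; for `x ≠ p` the Schur complement of the scalar block of `xI - Q` is the scalar plus
rank-one matrix `(x - n + 2)I - (1 + (n - p)/(x - p))J`, whose determinant is explicit.
-/

open Polynomial

open Classical in
/-- The signless Laplacian matrix Q = D + A of a finite simple graph, as a real matrix. -/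
noncomputable def signlessLaplacian (V : Type*) [Fintype V] (G : SimpleGraph V) :
    Matrix V V ℝ :=
  Matrix.of fun i j =>
    if i = j then (G.degree i : ℝ) else if G.Adj i j then 1 else 0

open Matrix

namespace Nat.Prime

theorem eq_one_or_prime_iff_dvd_of_dvd_pow {p g k : ℕ} (hp : p.Prime) (hg : g ∣ p ^ k) :
    g = 1 ∨ g.Prime ↔ g ∣ p := by
  refine ⟨?_, fun h => (hp.eq_one_or_self_of_dvd g h).imp id fun hgp : g = p => hgp ▸ hp⟩
  rintro (rfl | hg')
  · exact one_dvd p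
  · exact hg'.dvd_of_dvd_pow hg

theorem gcd_dvd_iff_of_dvd_pow {p a b k l : ℕ} (hp : p.Prime) (ha : a ∣ p ^ k)
    (hb : b ∣ p ^ l) :
    a.gcd b ∣ p ↔ a ∣ p ∨ b ∣ p := by
  refine ⟨fun h => ?_, Or.rec (dvd_trans (gcd_dvd_left a b)) (dvd_trans (gcd_dvd_right a b))⟩
  obtain ⟨i, -, rfl⟩ := (dvd_prime_pow hp).1 ha
  obtain ⟨j, -, rfl⟩ := (dvd_prime_pow hp).1 hb
  rcases le_total i j with hij | hij
  · rw [gcd_eq_left (pow_dvd_pow p hij)] at h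
    exact .inl h
  · rw [gcd_eq_right (pow_dvd_pow p hij)] at h
    exact .inr h

end Nat.Prime

theorem IsAddCyclic.card_nsmul_eq_zero_of_dvd {α : Type*} [AddGroup α] [Fintype α]
    [DecidableEq α] [IsAddCyclic α] {d : ℕ} (hd : d ∣ Fintype.card α) :
    Finset.card {a : α | d • a = 0} = d := by
  rw [← sum_card_addOrderOf_eq_card_nsmul_eq_zero (Nat.pos_of_dvd_of_pos hd Fintype.card_pos).ne']
  conv_rhs => rw [← d.sum_totient]
  exact Finset.sum_congr rfl fun e he =>
    IsAddCyclic.card_addOrderOf_eq_totient ((Nat.dvd_of_mem_divisors he).trans hd)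

/-- The join of the complete graph on `{x | P x}` with the edgeless graph on its complement. -/
def completeSplitGraph {V : Type*} (P : V → Prop) : SimpleGraph V :=
  SimpleGraph.fromRel fun x _ => P x

theorem completeSplitGraph_adj {V : Type*} {P : V → Prop} {x y : V} :
    (completeSplitGraph P).Adj x y ↔ x ≠ y ∧ (P x ∨ P y) :=
  SimpleGraph.fromRel_adj _ x y

theorem pcGraphAdd_adj {G : Type*} [AddGroup G] {x y : G} :
    (pcGraphAdd G).Adj x y ↔ x ≠ y ∧
      ((addOrderOf x).gcd (addOrderOf y) = 1 ∨ ((addOrderOf x).gcd (addOrderOf y)).Prime) :=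
  Iff.rfl

theorem pcGraphAdd_eq_completeSplitGraph {G : Type*} [AddGroup G] [Finite G] {p n : ℕ}
    (hp : p.Prime) (hG : Nat.card G = p ^ n) :
    pcGraphAdd G = completeSplitGraph fun x : G => p • x = 0 := by
  ext x y
  have hdvd (z : G) : addOrderOf z ∣ p ^ n := hG ▸ addOrderOf_dvd_natCard z
  rw [pcGraphAdd_adj, completeSplitGraph_adj, ← addOrderOf_dvd_iff_nsmul_eq_zero,
    ← addOrderOf_dvd_iff_nsmul_eq_zero,
    hp.eq_one_or_prime_iff_dvd_of_dvd_pow ((Nat.gcd_dvd_left _ _).trans (hdvd x)),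
    hp.gcd_dvd_iff_of_dvd_pow (hdvd x) (hdvd y)]

section BlockDeterminant

variable {K : Type*} [Field K] {α β : Type*} [Fintype α] [Fintype β] [DecidableEq α]
  [DecidableEq β]

theorem det_smul_one_sub_const {u : K} (hu : u ≠ 0) (c : K) :
    (u • (1 : Matrix α α K) - of fun _ _ => c).det =
      u ^ Fintype.card α * (1 - Fintype.card α * c / u) := by
  have hrank_one : u • (1 : Matrix α α K) - of (fun _ _ => c) =
      u • (1 + replicateCol Unit (fun _ : α => (1 : K)) *
        replicateRow Unit fun _ => -(c / u)) := by
    ext i j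
    by_cases hij : i = j <;>
      simp [hij, one_apply, mul_apply, mul_add, mul_div_cancel₀ _ hu, sub_eq_add_neg]
  rw [hrank_one, det_smul, det_one_add_replicateCol_mul_replicateRow]
  simp [dotProduct, div_eq_mul_inv, sub_eq_add_neg, mul_assoc]

theorem det_scalar_sub_fromBlocks_ones {x c d : K} (hc : x ≠ c) (hd : x ≠ d) :
    (scalar (α ⊕ β) x - fromBlocks (c • 1 + of fun _ _ => 1) (of fun _ _ => 1)
      (of fun _ _ => 1) (d • 1)).det =
      (x - d) ^ Fintype.card β * (x - c) ^ Fintype.card α *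
        (1 - Fintype.card α * (1 + Fintype.card β / (x - d)) / (x - c)) := by
  have hxd : x - d ≠ 0 := sub_ne_zero.2 hd
  have hblocks : scalar (α ⊕ β) x - fromBlocks (c • 1 + of fun _ _ => 1) (of fun _ _ => 1)
      (of fun _ _ => 1) (d • 1) = fromBlocks ((x - c) • 1 - of fun _ _ => 1)
        (-of fun _ _ => 1) (-of fun _ _ => 1) ((x - d) • (1 : Matrix β β K)) := by
    rw [scalar_apply, ← smul_one_eq_diagonal, ← fromBlocks_one, fromBlocks_smul, sub_eq_add_neg,
      fromBlocks_neg, fromBlocks_add]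
    congr 1 <;> module
  let : Invertible ((x - d) • (1 : Matrix β β K)) :=
    invertibleOfRightInverse _ ((x - d)⁻¹ • 1) (by simp [smul_smul, hxd])
  have hinv : ⅟((x - d) • (1 : Matrix β β K)) = (x - d)⁻¹ • 1 :=
    invOf_eq_right_inv (by simp [smul_smul, hxd])
  have hschur : ((x - c) • (1 : Matrix α α K) - of fun _ _ => 1) -
      (-of fun (_ : α) (_ : β) => (1 : K)) * ⅟((x - d) • (1 : Matrix β β K)) *
        (-of fun (_ : β) (_ : α) => (1 : K)) =
        (x - c) • (1 : Matrix α α K) - of fun _ _ => 1 + Fintype.card β / (x - d) := by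
    ext i j
    simp only [neg_of, hinv, Matrix.mul_smul, Matrix.mul_one, smul_of, smul_neg, Matrix.sub_apply,
      Matrix.smul_apply, smul_eq_mul, of_apply, mul_apply, Pi.neg_apply, Pi.smul_apply, mul_one,
      Finset.sum_const, Finset.card_univ, nsmul_eq_mul, div_eq_mul_inv]
    ring
  rw [hblocks, det_fromBlocks₂₂, hschur, det_smul_one_sub_const (sub_ne_zero.2 hc), det_smul,
    det_one, mul_one, mul_assoc]

theorem charpoly_fromBlocks_smul_one_add_ones [Infinite K] [Nonempty α] [Nonempty β] (c d : K) :
    (fromBlocks (c • 1 + of fun _ _ => 1) (of fun _ _ => 1) (of fun _ _ => 1) (d • 1) :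
      Matrix (α ⊕ β) (α ⊕ β) K).charpoly =
      (X - C d) ^ (Fintype.card β - 1) * (X - C c) ^ (Fintype.card α - 1) *
        ((X - C c) * (X - C d) - (Fintype.card α : K[X]) * (X - C d) -
          (Fintype.card α * Fintype.card β : K[X])) := by
  refine eq_of_infinite_eval_eq _ _ (((Set.finite_singleton c).insert d).infinite_compl.mono ?_)
  intro x hx
  simp only [Set.mem_compl_iff, Set.mem_insert_iff, Set.mem_singleton_iff, not_or] at hx
  obtain ⟨hd, hc⟩ := hx
  rw [Set.mem_ofPred_eq, eval_charpoly, det_scalar_sub_fromBlocks_ones hc hd]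
  obtain ⟨a, ha⟩ := Nat.exists_eq_add_one_of_ne_zero (Fintype.card_ne_zero (α := α))
  obtain ⟨b, hb⟩ := Nat.exists_eq_add_one_of_ne_zero (Fintype.card_ne_zero (α := β))
  have hxc : x - c ≠ 0 := sub_ne_zero.2 hc
  have hxd : x - d ≠ 0 := sub_ne_zero.2 hd
  simp only [ha, hb, Nat.add_sub_cancel, pow_succ, eval_mul, eval_sub, eval_pow, eval_X, eval_C,
    eval_natCast]
  field_simp
  ring

end BlockDeterminant

section CompleteSplitGraph

variable {V : Type*} [Fintype V] (P : V → Prop)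

theorem completeSplitGraph_degree_of_pos {v : V} (hv : P v)
    [Fintype ((completeSplitGraph P).neighborSet v)] :
    (completeSplitGraph P).degree v = Fintype.card V - 1 := by
  classical
  have hnbrs : (completeSplitGraph P).neighborFinset v = Finset.univ.erase v := by
    ext w
    simp [completeSplitGraph_adj, hv, eq_comm]
  rw [← SimpleGraph.card_neighborFinset_eq_degree, hnbrs, Finset.card_erase_of_mem
    (Finset.mem_univ v), Finset.card_univ]

theorem completeSplitGraph_degree_of_neg [DecidablePred P] {v : V} (hv : ¬P v)
    [Fintype ((completeSplitGraph P).neighborSet v)] :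
    (completeSplitGraph P).degree v = Fintype.card {x // P x} := by
  have hnbrs : (completeSplitGraph P).neighborFinset v = Finset.univ.filter P := by
    ext w
    simp only [SimpleGraph.mem_neighborFinset, completeSplitGraph_adj, hv, false_or,
      Finset.mem_filter, Finset.mem_univ, true_and]
    exact ⟨And.right, fun hw => ⟨fun h => hv (h ▸ hw), hw⟩⟩
  rw [← SimpleGraph.card_neighborFinset_eq_degree, hnbrs, Fintype.card_subtype]

theorem signlessLaplacian_completeSplitGraph_submatrix [DecidableEq V] [DecidablePred P] :
    (signlessLaplacian V (completeSplitGraph P)).submatrix (Equiv.sumCompl P) (Equiv.sumCompl P) =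
      fromBlocks (((Fintype.card V : ℝ) - 2) • 1 + of fun _ _ => 1) (of fun _ _ => 1)
        (of fun _ _ => 1) ((Fintype.card {x // P x} : ℝ) • 1) := by
  classical
  ext (i | i) (j | j)
  · have hV : 1 ≤ Fintype.card V := Fintype.card_pos_iff.2 ⟨i⟩
    by_cases hij : i = j
    · subst hij
      simp only [signlessLaplacian, submatrix_apply, Equiv.sumCompl_apply_inl, of_apply,
        ↓reduceIte, completeSplitGraph_degree_of_pos P i.2, Nat.cast_sub hV, Nat.cast_one,
        fromBlocks_apply₁₁, Matrix.add_apply, Matrix.smul_apply, one_apply_eq, smul_eq_mul,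
        mul_one]
      ring
    · have hne : (i : V) ≠ j := fun h => hij (Subtype.ext h)
      simp [signlessLaplacian, completeSplitGraph_adj, hne, hij, i.2]
  · have hne : (i : V) ≠ j := fun h => j.2 (h ▸ i.2)
    simp [signlessLaplacian, completeSplitGraph_adj, hne, i.2]
  · have hne : (i : V) ≠ j := fun h => i.2 (h ▸ j.2)
    simp [signlessLaplacian, completeSplitGraph_adj, hne, j.2]
  · by_cases hij : i = j
    · subst hij
      simp [signlessLaplacian, completeSplitGraph_degree_of_neg P i.2]
    · have hne : (i : V) ≠ j := fun h => hij (Subtype.ext h)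
      simp [signlessLaplacian, completeSplitGraph_adj, hne, hij, i.2, j.2]

theorem charpoly_signlessLaplacian_completeSplitGraph [DecidableEq V] [DecidablePred P]
    [Nonempty {x // P x}] [Nonempty {x // ¬P x}] :
    (signlessLaplacian V (completeSplitGraph P)).charpoly =
      (X - C (Fintype.card {x // P x} : ℝ)) ^ (Fintype.card {x // ¬P x} - 1) *
        (X - C ((Fintype.card V : ℝ) - 2)) ^ (Fintype.card {x // P x} - 1) *
        ((X - C ((Fintype.card V : ℝ) - 2)) * (X - C (Fintype.card {x // P x} : ℝ)) -
          (Fintype.card {x // P x} : ℝ[X]) * (X - C (Fintype.card {x // P x} : ℝ)) -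
          (Fintype.card {x // P x} * Fintype.card {x // ¬P x} : ℝ[X])) := by
  rw [← charpoly_reindex (Equiv.sumCompl P).symm, reindex_apply, Equiv.symm_symm,
    signlessLaplacian_completeSplitGraph_submatrix, charpoly_fromBlocks_smul_one_add_ones]

end CompleteSplitGraph

/-- The characteristic polynomial of the signless Laplacian of the prime coprime graph
of ℤ/p^mℤ, for a prime p and m ≥ 2. -/
theorem pcGraph_zmod_prime_pow_signlessLaplacian_charpoly (p m : ℕ) (hp : p.Prime)
    (hm : 2 ≤ m) :
    haveI : NeZero (p ^ m) := ⟨pow_ne_zero m hp.pos.ne'⟩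
    (signlessLaplacian (ZMod (p ^ m)) (pcGraphAdd (ZMod (p ^ m)))).charpoly =
      (X - C (p : ℝ)) ^ (p ^ m - p - 1) *
      (X - C ((p : ℝ) ^ m - 2)) ^ (p - 1) *
      (X ^ 2 - C ((p : ℝ) ^ m + 2 * p - 2) * X + C (2 * p * ((p : ℝ) - 1))) := by
  have : NeZero (p ^ m) := ⟨pow_ne_zero m hp.pos.ne'⟩
  have hpm : p < p ^ m := lt_self_pow₀ hp.one_lt (by omega)
  have hcard : Fintype.card {x : ZMod (p ^ m) // p • x = 0} = p := by
    rw [Fintype.card_subtype]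
    exact IsAddCyclic.card_nsmul_eq_zero_of_dvd (by rw [ZMod.card]; exact dvd_pow_self p (by omega))
  have hcard_compl : Fintype.card {x : ZMod (p ^ m) // ¬p • x = 0} = p ^ m - p := by
    rw [Fintype.card_subtype_compl, hcard, ZMod.card]
  have : Nonempty {x : ZMod (p ^ m) // p • x = 0} :=
    Fintype.card_pos_iff.1 (by rw [hcard]; exact hp.pos)
  have : Nonempty {x : ZMod (p ^ m) // ¬p • x = 0} :=
    Fintype.card_pos_iff.1 (by rw [hcard_compl]; omega)
  rw [pcGraphAdd_eq_completeSplitGraph hp (Nat.card_zmod _),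
    charpoly_signlessLaplacian_completeSplitGraph, hcard, hcard_compl, ZMod.card]
  rw [Nat.cast_sub (R := ℝ[X]) hpm.le]
  simp only [map_add, map_sub, map_mul, map_pow, map_natCast, map_ofNat, map_one, Nat.cast_pow]
  ring
end
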